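/- Let Q be a finite quiver satisfying the exclusive condition. If the maximal length of a chain of cycles in Q is n, then the maximal length of a chain of cycles in the Kronecker square Q̂ is 2n − 1. -/

import Mathlib

structure Quiv where
  V : Type
  A : Type
  s : A → V
  t : A → V

namespace Quiv

/-- The Kronecker square of a quiver. -/
def kron (Q : Quiv) : Quiv where
  V := Q.V × Q.V
  A := Q.A × Q.A
  s := fun p => (Q.s p.1, Q.s p.2)
  t := fun p => (Q.t p.1, Q.t p.2)

instance toQuiver (Q : Quiv) : Quiver Q.V :=
  ⟨fun i j => {a : Q.A // Q.s a = i ∧ Q.t a = j}⟩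

/-- Paths of length `k` from `i` to `j`. -/
def PathN (Q : Quiv) (i j : Q.V) (k : ℕ) : Type :=
  {p : Quiver.Path i j // p.length = k}

end Quiv

namespace Quiv

variable {Q : Quiv}

/-- The list of arrows traversed by a path. -/
def arrowsOf : ∀ {i j : Q.V}, Quiver.Path i j → List Q.A
  | _, _, Quiver.Path.nil => []
  | _, _, Quiver.Path.cons p a => arrowsOf p ++ [a.1]

/-- The list of vertices visited by a path. -/
def vertsOf : ∀ {i j : Q.V}, Quiver.Path i j → List Q.V
  | i, _, Quiver.Path.nil => [i]
  | _, _, Quiver.Path.cons p a => vertsOf p ++ [Q.t a.1]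

/-- An (oriented) cycle of a quiver: a nontrivial path from a vertex to itself. -/
def Cycle (Q : Quiv) : Type :=
  Σ x : Q.V, {c : Quiver.Path x x // 0 < c.length}

/-- The arrows of a cycle, as a set. -/
def Cycle.arrowSet (c : Q.Cycle) : Set Q.A := {a | a ∈ arrowsOf c.2.1}

/-- The vertices of a cycle, as a set. -/
def Cycle.vertSet (c : Q.Cycle) : Set Q.V := {v | v ∈ vertsOf c.2.1}

end Quiv

/-- The exclusive condition: any two distinct oriented cycles (i.e., cycles with different
sets of arrows) are vertex-disjoint. -/
def Quiv.Exclusive (Q : Quiv) : Prop :=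
  ∀ c d : Q.Cycle, c.arrowSet ≠ d.arrowSet → c.vertSet ∩ d.vertSet = ∅

/-- `c ⇒ d`: there is a path from a vertex of the cycle `c` to a vertex of the cycle `d`. -/
def Quiv.Cycle.Reaches {Q : Quiv} (c d : Q.Cycle) : Prop :=
  ∃ u ∈ c.vertSet, ∃ v ∈ d.vertSet, Nonempty (Quiver.Path u v)

/-- `Q` has a chain of cycles of length `n`: pairwise distinct cycles
`c_1 ⇒ c_2 ⇒ ⋯ ⇒ c_n`. -/
def Quiv.HasChainOfCycles (Q : Quiv) (n : ℕ) : Prop :=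
  ∃ cs : Fin n → Q.Cycle,
    (∀ i j, i ≠ j → (cs i).arrowSet ≠ (cs j).arrowSet) ∧
    ∀ (i : ℕ) (h : i + 1 < n),
      (cs ⟨i, Nat.lt_of_succ_lt h⟩).Reaches (cs ⟨i + 1, h⟩)

/-!
Under the exclusive condition every vertex of a cycle `c` has exactly one outgoing arrow in `c`,
a path between two vertices of `c` stays inside `c`, and reachability is antisymmetric on cycles.

Lower bound: given a chain `c₁ ⇒ ⋯ ⇒ cₙ`, let `Δcᵢ` be the diagonal copy of `cᵢ` in `Q̂` and let
`Mᵢ` be a cycle of `Q̂` whose coordinates run around `cᵢ` and `cᵢ₊₁` (for a common multiple of their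
lengths), placed so that `Δcᵢ ⇒ Mᵢ ⇒ Δcᵢ₊₁`. The chain `Δc₁ ⇒ M₁ ⇒ Δc₂ ⇒ ⋯ ⇒ Δcₙ` has length
`2n - 1`.

Upper bound: project a chain `d₁ ⇒ ⋯ ⇒ d_m` of `Q̂` to both coordinates. Inside the product of the
two projected cycles of `dᵢ` the outgoing arrow at each vertex is unique, so if `dᵢ ⇒ dⱼ` and both
projections agree, then `dᵢ` and `dⱼ` have the same arrows; hence each step changes a projection.
By antisymmetry each projection takes every value on an interval of indices, and its distinct
values, in order, form a chain of `Q`. Counting first occurrences gives `m + 1 ≤ n + n`.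
-/

open Quiver

theorem Quiver.Path.mem_vertices_comp {V : Type*} [Quiver V] {a b c : V} (p : Path a b)
    (q : Path b c) {v : V} : v ∈ (p.comp q).vertices ↔ v ∈ p.vertices ∨ v ∈ q.vertices := by
  rw [Path.vertices_comp, List.mem_append]
  refine ⟨Or.imp_left List.mem_of_mem_dropLast, Or.rec (fun hv => ?_) Or.inr⟩
  rw [← p.dropLast_append_end_eq, List.mem_append, List.mem_singleton] at hv
  exact hv.imp_right fun h : v = b => h ▸ q.start_mem_vertices

theorem Prefunctor.length_mapPath {V W : Type*} [Quiver V] [Quiver W] (F : V ⥤q W) {a b : V}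
    (p : Path a b) : (F.mapPath p).length = p.length := by
  induction p with
  | nil => rfl
  | cons p e ih => simp [ih]

theorem Prefunctor.vertices_mapPath {V W : Type*} [Quiver V] [Quiver W] (F : V ⥤q W) {a b : V}
    (p : Path a b) : (F.mapPath p).vertices = p.vertices.map F.obj := by
  induction p with
  | nil => rfl
  | cons p e ih => simp [ih]

namespace Fin

variable {α β : Type*} {m : ℕ}

open Classical in
noncomputable def firstOccurrences (f : Fin m → α) : Finset (Fin m) :=
  {i | ∀ j < i, f j ≠ f i}

theorem mem_firstOccurrences {f : Fin m → α} {i : Fin m} :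
    i ∈ firstOccurrences f ↔ ∀ j < i, f j ≠ f i := by
  simp [firstOccurrences]

theorem mem_firstOccurrences_of_ne {f : Fin m → α} (hf : ∀ a, (f ⁻¹' {a}).OrdConnected)
    {p i : Fin m} (hpi : p.1 + 1 = i.1) (hne : f p ≠ f i) : i ∈ firstOccurrences f := by
  refine mem_firstOccurrences.2 fun j hj hji => hne ?_
  have hj := Fin.lt_def.1 hj
  exact (hf (f i)).out hji rfl ⟨Fin.le_def.2 (by omega), Fin.le_def.2 (by omega)⟩

theorem add_one_le_card_firstOccurrences_add (hm : 0 < m) {f : Fin m → α} {g : Fin m → β}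
    (hf : ∀ a, (f ⁻¹' {a}).OrdConnected) (hg : ∀ b, (g ⁻¹' {b}).OrdConnected)
    (hfg : ∀ i j, i < j → f i ≠ f j ∨ g i ≠ g j) :
    m + 1 ≤ (firstOccurrences f).card + (firstOccurrences g).card := by
  have h0 : (⟨0, hm⟩ : Fin m) ∈ firstOccurrences f ∩ firstOccurrences g := by
    simp [mem_firstOccurrences, Fin.lt_def]
  have hcover : Finset.univ ⊆ firstOccurrences f ∪ firstOccurrences g := by
    intro i _
    rcases Nat.eq_zero_or_pos i.1 with hi | hi
    · obtain rfl : i = ⟨0, hm⟩ := Fin.ext hi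
      exact Finset.mem_union_left _ (Finset.mem_inter.1 h0).1
    · let p : Fin m := ⟨i.1 - 1, by omega⟩
      have hpi : p.1 + 1 = i.1 := by simp only [p]; omega
      rcases hfg p i (Fin.lt_def.2 (by omega)) with h | h
      · exact Finset.mem_union_left _ (mem_firstOccurrences_of_ne hf hpi h)
      · exact Finset.mem_union_right _ (mem_firstOccurrences_of_ne hg hpi h)
  have hunion := Finset.card_union_add_card_inter (firstOccurrences f) (firstOccurrences g)
  have hcard := Finset.card_le_card hcover
  have hinter := Finset.card_pos.2 ⟨_, h0⟩
  rw [Finset.card_univ, Fintype.card_fin] at hcard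
  omega

end Fin

namespace Quiv

variable {Q : Quiv}

@[simp] theorem arrowsOf_nil {i : Q.V} : arrowsOf (Path.nil : Path i i) = [] := by
  simp [arrowsOf]

@[simp] theorem arrowsOf_cons {i j k : Q.V} (p : Path i j) (e : j ⟶ k) :
    arrowsOf (p.cons e) = arrowsOf p ++ [e.1] := by
  simp [arrowsOf]

@[simp] theorem length_arrowsOf {i j : Q.V} (p : Path i j) : (arrowsOf p).length = p.length := by
  induction p with
  | nil => simp
  | cons p e ih => simp [ih]

@[simp] theorem arrowsOf_comp {i j k : Q.V} (p : Path i j) (q : Path j k) :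
    arrowsOf (p.comp q) = arrowsOf p ++ arrowsOf q := by
  induction q with
  | nil => simp
  | cons q e ih => simp [ih]

theorem vertsOf_eq_vertices {i j : Q.V} (p : Path i j) : vertsOf p = p.vertices := by
  induction p with
  | nil => simp [vertsOf]
  | cons p e ih => simp [vertsOf, ih, e.2.2]

theorem source_mem_vertices {i j : Q.V} {p : Path i j} {a : Q.A} (ha : a ∈ arrowsOf p) :
    Q.s a ∈ p.vertices := by
  induction p with
  | nil => simp at ha
  | cons p e ih =>
    rw [arrowsOf_cons, List.mem_append, List.mem_singleton] at ha
    rw [Path.mem_vertices_cons]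
    rcases ha with ha | rfl
    · exact Or.inl (ih ha)
    · rw [e.2.1]
      exact Or.inl p.end_mem_vertices

theorem target_mem_vertices {i j : Q.V} {p : Path i j} {a : Q.A} (ha : a ∈ arrowsOf p) :
    Q.t a ∈ p.vertices := by
  induction p with
  | nil => simp at ha
  | cons p e ih =>
    rw [arrowsOf_cons, List.mem_append, List.mem_singleton] at ha
    rw [Path.mem_vertices_cons]
    rcases ha with ha | rfl
    · exact Or.inl (ih ha)
    · exact Or.inr e.2.2

theorem exists_eq_comp_cons_of_mem_arrowsOf {i j : Q.V} {p : Path i j} {a : Q.A}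
    (ha : a ∈ arrowsOf p) :
    ∃ (k l : Q.V) (q : Path i k) (e : k ⟶ l) (r : Path l j),
      p = (q.cons e).comp r ∧ e.1 = a ∧ a ∉ arrowsOf q := by
  induction p with
  | nil => simp at ha
  | cons p e ih =>
    by_cases hp : a ∈ arrowsOf p
    · obtain ⟨k, l, q, e', r, rfl, he', hq⟩ := ih hp
      exact ⟨k, l, q, e', r.cons e, rfl, he', hq⟩
    · rw [arrowsOf_cons, List.mem_append, List.mem_singleton] at ha
      exact ⟨_, _, p, e, Path.nil, rfl, (ha.resolve_left hp).symm, hp⟩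

theorem exists_loop_not_mem_of_mem_arrowsOf {w : Q.V} (p : Path w w) {a : Q.A}
    (ha : a ∈ arrowsOf p) (hs : Q.s a = w) :
    (arrowsOf p).head? = some a ∨ ∃ q : Path w w, 0 < q.length ∧ a ∉ arrowsOf q := by
  obtain ⟨k, l, q, e, r, rfl, rfl, hq⟩ := exists_eq_comp_cons_of_mem_arrowsOf ha
  obtain rfl : k = w := e.2.1.symm.trans hs
  rcases Nat.eq_zero_or_pos q.length with h | h
  · rw [(Path.length_eq_zero_iff q).1 h]
    simp
  · exact Or.inr ⟨q, h, hq⟩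

theorem arrowsOf_mapPath {R : Quiv} (F : R.V ⥤q Q.V) {g : R.A → Q.A}
    (hF : ∀ {i j : R.V} (e : i ⟶ j), (F.map e).1 = g e.1) {i j : R.V} (p : Path i j) :
    arrowsOf (F.mapPath p) = (arrowsOf p).map g := by
  induction p with
  | nil => simp
  | cons p e ih => simp [ih, hF]

namespace Cycle

theorem mem_vertSet {c : Q.Cycle} {v : Q.V} : v ∈ c.vertSet ↔ v ∈ c.2.1.vertices := by
  rw [vertSet, Set.mem_ofPred_eq, vertsOf_eq_vertices]

theorem base_mem_vertSet (c : Q.Cycle) : c.1 ∈ c.vertSet :=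
  mem_vertSet.2 c.2.1.start_mem_vertices

theorem source_mem_vertSet {c : Q.Cycle} {a : Q.A} (ha : a ∈ c.arrowSet) : Q.s a ∈ c.vertSet :=
  mem_vertSet.2 (source_mem_vertices ha)

theorem target_mem_vertSet {c : Q.Cycle} {a : Q.A} (ha : a ∈ c.arrowSet) : Q.t a ∈ c.vertSet :=
  mem_vertSet.2 (target_mem_vertices ha)

theorem exists_rotation (c : Q.Cycle) {u : Q.V} (hu : u ∈ c.vertSet) :
    ∃ ρ : Path u u, ρ.length = c.2.1.length ∧ (∀ a, a ∈ arrowsOf ρ ↔ a ∈ c.arrowSet) ∧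
      ∀ v, v ∈ ρ.vertices ↔ v ∈ c.vertSet := by
  obtain ⟨p₁, p₂, hp⟩ := c.2.1.exists_eq_comp_of_mem_vertices (mem_vertSet.1 hu)
  refine ⟨p₂.comp p₁, ?_, fun a => ?_, fun v => ?_⟩
  · rw [hp, Path.length_comp, Path.length_comp, add_comm]
  · rw [arrowSet, Set.mem_ofPred_eq, hp, arrowsOf_comp, arrowsOf_comp, List.mem_append,
      List.mem_append, or_comm]
  · rw [mem_vertSet, hp, Path.mem_vertices_comp, Path.mem_vertices_comp, or_comm]

theorem exists_path (c : Q.Cycle) {u v : Q.V} (hu : u ∈ c.vertSet) (hv : v ∈ c.vertSet) :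
    ∃ p : Path u v, ∀ a ∈ arrowsOf p, a ∈ c.arrowSet := by
  obtain ⟨ρ, -, hρa, hρv⟩ := c.exists_rotation hu
  obtain ⟨p, q, rfl⟩ := ρ.exists_eq_comp_of_mem_vertices ((hρv v).2 hv)
  exact ⟨p, fun a ha => (hρa a).1 (by simp [ha])⟩

theorem exists_arrow_source_eq (c : Q.Cycle) {v : Q.V} (hv : v ∈ c.vertSet) :
    ∃ a ∈ c.arrowSet, Q.s a = v := by
  obtain ⟨ρ, hρ, hρa, -⟩ := c.exists_rotation hv
  obtain ⟨w, e, ρ', rfl, -⟩ := (Path.length_ne_zero_iff_eq_comp ρ).1 (hρ ▸ c.2.2.ne')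
  exact ⟨e.1, (hρa _).1 (by simp [Hom.toPath]), e.2.1⟩

theorem arrowSet_nonempty (c : Q.Cycle) : c.arrowSet.Nonempty :=
  let ⟨a, ha, _⟩ := c.exists_arrow_source_eq c.base_mem_vertSet
  ⟨a, ha⟩

theorem vertSet_subset_of_arrowSet_subset {c d : Q.Cycle} (h : c.arrowSet ⊆ d.arrowSet) :
    c.vertSet ⊆ d.vertSet := fun _ hv =>
  let ⟨_, ha, hav⟩ := c.exists_arrow_source_eq hv
  hav ▸ source_mem_vertSet (h ha)

theorem vertSet_eq_of_arrowSet_eq {c d : Q.Cycle} (h : c.arrowSet = d.arrowSet) :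
    c.vertSet = d.vertSet :=
  (vertSet_subset_of_arrowSet_subset h.le).antisymm (vertSet_subset_of_arrowSet_subset h.ge)

theorem exists_loop_length_eq_mul (c : Q.Cycle) (k : ℕ) :
    ∃ ρ : Path c.1 c.1, ρ.length = k * c.2.1.length ∧ ∀ a ∈ arrowsOf ρ, a ∈ c.arrowSet := by
  induction k with
  | zero => exact ⟨Path.nil, by simp, by simp⟩
  | succ k ih =>
    obtain ⟨ρ, hρ, hρa⟩ := ih
    refine ⟨ρ.comp c.2.1, by simp [hρ, Nat.succ_mul], fun a ha => ?_⟩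
    rw [arrowsOf_comp, List.mem_append] at ha
    exact ha.elim (hρa a) id

theorem reaches_refl (c : Q.Cycle) : c.Reaches c :=
  ⟨c.1, c.base_mem_vertSet, c.1, c.base_mem_vertSet, ⟨Path.nil⟩⟩

theorem Reaches.trans {c d e : Q.Cycle} (h₁ : c.Reaches d) (h₂ : d.Reaches e) : c.Reaches e := by
  obtain ⟨u, hu, v, hv, ⟨p⟩⟩ := h₁
  obtain ⟨v', hv', w, hw, ⟨q⟩⟩ := h₂
  obtain ⟨r, -⟩ := d.exists_path hv hv'
  exact ⟨u, hu, w, hw, ⟨(p.comp r).comp q⟩⟩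

theorem Reaches.nonempty_path {c d : Q.Cycle} (h : c.Reaches d) : Nonempty (Path c.1 d.1) := by
  obtain ⟨u, hu, v, hv, ⟨p⟩⟩ := h
  obtain ⟨p₀, -⟩ := c.exists_path c.base_mem_vertSet hu
  obtain ⟨p₁, -⟩ := d.exists_path hv d.base_mem_vertSet
  exact ⟨(p₀.comp p).comp p₁⟩

theorem Reaches.of_arrowSet_eq_right {c d d' : Q.Cycle} (h : c.Reaches d)
    (hd : d.arrowSet = d'.arrowSet) : c.Reaches d' := by
  obtain ⟨u, hu, v, hv, hp⟩ := h
  exact ⟨u, hu, v, vertSet_eq_of_arrowSet_eq hd ▸ hv, hp⟩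

theorem reaches_of_le {m : ℕ} {cs : Fin m → Q.Cycle}
    (hreach : ∀ (i : ℕ) (h : i + 1 < m), (cs ⟨i, Nat.lt_of_succ_lt h⟩).Reaches (cs ⟨i + 1, h⟩))
    {i j : Fin m} (hij : i ≤ j) : (cs i).Reaches (cs j) := by
  obtain ⟨i, hi⟩ := i
  obtain ⟨j, hj⟩ := j
  induction j with
  | zero =>
    obtain rfl : i = 0 := by simpa using hij
    exact reaches_refl _
  | succ j ih =>
    rcases (Fin.mk_le_mk.1 hij).eq_or_lt with rfl | hlt
    · exact reaches_refl _
    · exact (ih (by omega) (Fin.mk_le_mk.2 (by omega))).trans (hreach j hj)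

variable {R : Quiv}

def map (F : R.V ⥤q Q.V) (c : R.Cycle) : Q.Cycle :=
  ⟨F.obj c.1, F.mapPath c.2.1, by rw [F.length_mapPath]; exact c.2.2⟩

theorem mem_vertSet_map (F : R.V ⥤q Q.V) {c : R.Cycle} {v : R.V} (hv : v ∈ c.vertSet) :
    F.obj v ∈ (c.map F).vertSet :=
  mem_vertSet.2 (F.vertices_mapPath c.2.1 ▸ List.mem_map_of_mem (mem_vertSet.1 hv))

theorem mem_arrowSet_map {F : R.V ⥤q Q.V} {g : R.A → Q.A}
    (hF : ∀ {i j : R.V} (e : i ⟶ j), (F.map e).1 = g e.1) {c : R.Cycle} {a : R.A}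
    (ha : a ∈ c.arrowSet) : g a ∈ (c.map F).arrowSet := by
  show g a ∈ arrowsOf (F.mapPath c.2.1)
  rw [arrowsOf_mapPath F hF]
  exact List.mem_map_of_mem ha

theorem Reaches.map (F : R.V ⥤q Q.V) {c d : R.Cycle} (h : c.Reaches d) :
    (c.map F).Reaches (d.map F) := by
  obtain ⟨u, hu, v, hv, ⟨p⟩⟩ := h
  exact ⟨_, mem_vertSet_map F hu, _, mem_vertSet_map F hv, ⟨F.mapPath p⟩⟩

variable {C : Set Q.A}

theorem mem_arrowSet_iff_of_injOn (hC : C.InjOn Q.s) {c : Q.Cycle} (hc : c.arrowSet ⊆ C)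
    {a : Q.A} : a ∈ c.arrowSet ↔ a ∈ C ∧ Q.s a ∈ c.vertSet := by
  refine ⟨fun ha => ⟨hc ha, source_mem_vertSet ha⟩, fun ⟨ha, hav⟩ => ?_⟩
  obtain ⟨b, hb, hba⟩ := c.exists_arrow_source_eq hav
  exact hC (hc hb) ha hba ▸ hb

theorem mem_vertSet_of_path_of_injOn (hC : C.InjOn Q.s) {c : Q.Cycle} (hc : c.arrowSet ⊆ C)
    {u v : Q.V} (hu : u ∈ c.vertSet) (p : Path u v) (hp : ∀ a ∈ arrowsOf p, a ∈ C) :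
    v ∈ c.vertSet := by
  induction p with
  | nil => exact hu
  | cons p e ih =>
    have hsource : Q.s e.1 ∈ c.vertSet := by
      rw [e.2.1]
      exact ih fun a ha => hp a (by simp [ha])
    have he : e.1 ∈ c.arrowSet := (mem_arrowSet_iff_of_injOn hC hc).2 ⟨hp _ (by simp), hsource⟩
    rw [← e.2.2]
    exact target_mem_vertSet he

theorem arrowSet_eq_of_path_of_injOn (hC : C.InjOn Q.s) {c d : Q.Cycle} (hc : c.arrowSet ⊆ C)
    (hd : d.arrowSet ⊆ C) {u v : Q.V} (hu : u ∈ c.vertSet) (hv : v ∈ d.vertSet) (p : Path u v)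
    (hp : ∀ a ∈ arrowsOf p, a ∈ C) : c.arrowSet = d.arrowSet := by
  have hvc := mem_vertSet_of_path_of_injOn hC hc hu p hp
  have hcd : c.vertSet = d.vertSet := by
    refine Set.Subset.antisymm (fun w hw => ?_) (fun w hw => ?_)
    · obtain ⟨q, hq⟩ := c.exists_path hvc hw
      exact mem_vertSet_of_path_of_injOn hC hd hv q fun a ha => hc (hq a ha)
    · obtain ⟨q, hq⟩ := d.exists_path hv hw
      exact mem_vertSet_of_path_of_injOn hC hc hvc q fun a ha => hd (hq a ha)
  ext a
  rw [mem_arrowSet_iff_of_injOn hC hc, mem_arrowSet_iff_of_injOn hC hd, hcd]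

end Cycle

theorem hasChainOfCycles_card_firstOccurrences {m : ℕ} {x : Fin m → Q.Cycle}
    (hx : ∀ i j, i ≤ j → (x i).Reaches (x j)) :
    Q.HasChainOfCycles (Fin.firstOccurrences fun k => (x k).arrowSet).card := by
  set F := Fin.firstOccurrences fun k => (x k).arrowSet
  let e := F.orderEmbOfFin rfl
  have hne : ∀ k k', k < k' → (x (e k)).arrowSet ≠ (x (e k')).arrowSet := fun k k' h =>
    Fin.mem_firstOccurrences.1 (F.orderEmbOfFin_mem rfl k') _ (e.strictMono h)
  refine ⟨fun k => x (e k), fun k k' hkk' => ?_,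
    fun i h => hx _ _ (e.monotone (Fin.mk_le_mk.2 (by omega)))⟩
  rcases hkk'.lt_or_gt with h | h
  · exact hne k k' h
  · exact (hne k' k h).symm

def kronFst (Q : Quiv) : Q.kron.V ⥤q Q.V where
  obj := Prod.fst
  map e := ⟨e.1.1, congrArg Prod.fst e.2.1, congrArg Prod.fst e.2.2⟩

def kronSnd (Q : Quiv) : Q.kron.V ⥤q Q.V where
  obj := Prod.snd
  map e := ⟨e.1.2, congrArg Prod.snd e.2.1, congrArg Prod.snd e.2.2⟩

def kronDiag (Q : Quiv) : Q.V ⥤q Q.kron.V where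
  obj v := (v, v)
  map e := ⟨(e.1, e.1), Prod.ext e.2.1 e.2.1, Prod.ext e.2.2 e.2.2⟩

theorem exists_kron_path {u v w z : Q.V} (p : Path u v) (q : Path w z) (h : p.length = q.length) :
    ∃ r : Path (V := Q.kron.V) (u, w) (v, z),
      r.length = p.length ∧ arrowsOf (Q := Q.kron) r = (arrowsOf p).zip (arrowsOf q) := by
  induction p generalizing z with
  | nil =>
    cases q with
    | nil => exact ⟨Path.nil, rfl, (arrowsOf_nil (Q := Q.kron)).trans (by simp; rfl)⟩
    | cons q b => simp at h
  | cons p a ih =>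
    cases q with
    | nil => simp at h
    | cons q b =>
      obtain ⟨r, hr, hrA⟩ := ih q (by simpa using h)
      refine ⟨r.cons ⟨(a.1, b.1), Prod.ext a.2.1 b.2.1, Prod.ext a.2.2 b.2.2⟩,
        congrArg (· + 1) hr, (arrowsOf_cons (Q := Q.kron) r _).trans ?_⟩
      rw [hrA, arrowsOf_cons, arrowsOf_cons, List.zip_append (by simpa using h)]
      rfl

theorem Cycle.Reaches.exists_kron_cycle {c d : Q.Cycle} (hcd : c.Reaches d) :
    ∃ M : Q.kron.Cycle, (∀ a ∈ M.arrowSet, a.1 ∈ c.arrowSet ∧ a.2 ∈ d.arrowSet) ∧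
      (c.map Q.kronDiag).Reaches M ∧ M.Reaches (d.map Q.kronDiag) := by
  obtain ⟨P⟩ := hcd.nonempty_path
  have hT : P.length + 1 ≤ d.2.1.length * (P.length + 1) * c.2.1.length :=
    (Nat.le_mul_of_pos_left _ d.2.2).trans (Nat.le_mul_of_pos_right _ c.2.2)
  -- Both coordinates of the new cycle are loops of this common length; the first one is split
  -- after `|P|` steps so that it can run alongside `P`.
  obtain ⟨ρc, hρc, hρcA⟩ := c.exists_loop_length_eq_mul (d.2.1.length * (P.length + 1))
  obtain ⟨ρd, hρd, hρdA⟩ := d.exists_loop_length_eq_mul (c.2.1.length * (P.length + 1))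
  obtain ⟨w, q₁, q₂, rfl, hq₁⟩ := ρc.exists_eq_comp_of_le_length (n := P.length) (by omega)
  rw [Path.length_comp] at hρc
  obtain ⟨r, hr, hrA⟩ := exists_kron_path (q₂.comp q₁) ρd
    (by rw [Path.length_comp, hρd]; linarith)
  obtain ⟨r₁, -⟩ := exists_kron_path q₁ P hq₁
  obtain ⟨r₂, -⟩ := exists_kron_path (q₂.comp P) ρd (by rw [Path.length_comp, hρd]; linarith)
  refine ⟨⟨(w, d.1), r, by rw [hr, Path.length_comp]; omega⟩, fun a ha => ?_,
    ⟨_, Cycle.base_mem_vertSet _, _, Cycle.base_mem_vertSet _, ⟨r₁⟩⟩,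
    ⟨_, Cycle.base_mem_vertSet _, _, Cycle.base_mem_vertSet _, ⟨r₂⟩⟩⟩
  have ha : a ∈ (arrowsOf (q₂.comp q₁)).zip (arrowsOf ρd) := hrA ▸ ha
  obtain ⟨ha₁, ha₂⟩ := List.of_mem_zip ha
  refine ⟨hρcA _ ?_, hρdA _ ha₂⟩
  rw [arrowsOf_comp, List.mem_append] at ha₁ ⊢
  exact ha₁.symm

namespace Exclusive

theorem arrowSet_eq_of_mem_vertSet (hex : Q.Exclusive) {c d : Q.Cycle} {v : Q.V}
    (hc : v ∈ c.vertSet) (hd : v ∈ d.vertSet) : c.arrowSet = d.arrowSet := by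
  by_contra h
  exact (hex c d h).subset ⟨hc, hd⟩

theorem mem_arrowSet_of_mem_loop (hex : Q.Exclusive) {c : Q.Cycle} {u : Q.V}
    (hu : u ∈ c.vertSet) (p : Path u u) {a : Q.A} (ha : a ∈ arrowsOf p) : a ∈ c.arrowSet := by
  have hp : 0 < p.length := length_arrowsOf p ▸ List.length_pos_of_mem ha
  have hpc := hex.arrowSet_eq_of_mem_vertSet (c := ⟨u, p, hp⟩) (Cycle.base_mem_vertSet _) hu
  exact hpc ▸ ha

theorem mem_arrowSet_of_path (hex : Q.Exclusive) {c : Q.Cycle} {u v : Q.V} (hu : u ∈ c.vertSet)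
    (hv : v ∈ c.vertSet) (p : Path u v) {a : Q.A} (ha : a ∈ arrowsOf p) : a ∈ c.arrowSet := by
  obtain ⟨q, -⟩ := c.exists_path hv hu
  exact hex.mem_arrowSet_of_mem_loop hu (p.comp q) (by simp [ha])

theorem arrowSet_eq_of_reaches_of_reaches (hex : Q.Exclusive) {c d : Q.Cycle}
    (hcd : c.Reaches d) (hdc : d.Reaches c) : c.arrowSet = d.arrowSet := by
  obtain ⟨p⟩ := hcd.nonempty_path
  obtain ⟨q⟩ := hdc.nonempty_path
  let E : Q.Cycle := ⟨c.1, (p.comp q).comp c.2.1, by simp [c.2.2]⟩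
  have hE : E.arrowSet = c.arrowSet :=
    hex.arrowSet_eq_of_mem_vertSet E.base_mem_vertSet c.base_mem_vertSet
  have hdE : d.1 ∈ E.vertSet := by
    rw [Cycle.mem_vertSet, Path.mem_vertices_comp, Path.mem_vertices_comp]
    exact Or.inl (Or.inl p.end_mem_vertices)
  exact hex.arrowSet_eq_of_mem_vertSet (Cycle.vertSet_eq_of_arrowSet_eq hE ▸ hdE)
    d.base_mem_vertSet

theorem injOn_source (hex : Q.Exclusive) (c : Q.Cycle) : c.arrowSet.InjOn Q.s := by
  intro a ha b hb hab
  by_contra hne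
  have hw := Cycle.source_mem_vertSet ha
  obtain ⟨ρ, -, hρa, -⟩ := c.exists_rotation hw
  -- If the first arrow of `ρ` were not `x`, the part of `ρ` before `x` would be a cycle through
  -- `s a` avoiding `x`. So both `a` and `b` are the first arrow of `ρ`.
  have head_eq : ∀ x ∈ c.arrowSet, Q.s x = Q.s a → (arrowsOf ρ).head? = some x := by
    intro x hx hxs
    refine (exists_loop_not_mem_of_mem_arrowsOf ρ ((hρa x).2 hx) hxs).resolve_right ?_
    rintro ⟨q, hq, hxq⟩
    have hqc := hex.arrowSet_eq_of_mem_vertSet (c := ⟨_, q, hq⟩) (Cycle.base_mem_vertSet _) hw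
    exact hxq (hqc.symm ▸ hx :)
  exact hne (Option.some_injective _ ((head_eq a ha rfl).symm.trans (head_eq b hb hab.symm)))

theorem map_mem_arrowSet_of_path (hex : Q.Exclusive) {R : Quiv} {F : R.V ⥤q Q.V}
    {g : R.A → Q.A} (hF : ∀ {i j : R.V} (e : i ⟶ j), (F.map e).1 = g e.1) {c d : R.Cycle}
    (hcd : (c.map F).arrowSet = (d.map F).arrowSet) {u v : R.V} (hu : u ∈ c.vertSet)
    (hv : v ∈ d.vertSet) (p : Path u v) {a : R.A} (ha : a ∈ arrowsOf p) :
    g a ∈ (c.map F).arrowSet := by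
  refine hex.mem_arrowSet_of_path (Cycle.mem_vertSet_map F hu)
    (Cycle.vertSet_eq_of_arrowSet_eq hcd ▸ Cycle.mem_vertSet_map F hv) (F.mapPath p) ?_
  rw [arrowsOf_mapPath F hF]
  exact List.mem_map_of_mem ha

theorem kron_arrowSet_eq (hex : Q.Exclusive) {c d : Q.kron.Cycle} (hcd : c.Reaches d)
    (h₁ : (c.map Q.kronFst).arrowSet = (d.map Q.kronFst).arrowSet)
    (h₂ : (c.map Q.kronSnd).arrowSet = (d.map Q.kronSnd).arrowSet) :
    c.arrowSet = d.arrowSet := by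
  set C := (c.map Q.kronFst).arrowSet ×ˢ (c.map Q.kronSnd).arrowSet
  have hC : C.InjOn Q.kron.s := (hex.injOn_source _).prodMap (hex.injOn_source _)
  have hsub : ∀ e : Q.kron.Cycle, (e.map Q.kronFst).arrowSet = (c.map Q.kronFst).arrowSet →
      (e.map Q.kronSnd).arrowSet = (c.map Q.kronSnd).arrowSet → e.arrowSet ⊆ C :=
    fun e he₁ he₂ a ha => ⟨he₁ ▸ Cycle.mem_arrowSet_map (fun _ => rfl) ha,
      he₂ ▸ Cycle.mem_arrowSet_map (fun _ => rfl) ha⟩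
  obtain ⟨u, hu, v, hv, ⟨p⟩⟩ := hcd
  exact Cycle.arrowSet_eq_of_path_of_injOn hC (hsub c rfl rfl) (hsub d h₁.symm h₂.symm) hu hv p
    fun a ha => ⟨hex.map_mem_arrowSet_of_path (fun _ => rfl) h₁ hu hv p ha,
      hex.map_mem_arrowSet_of_path (fun _ => rfl) h₂ hu hv p ha⟩

theorem ordConnected_preimage_arrowSet (hex : Q.Exclusive) {m : ℕ} {x : Fin m → Q.Cycle}
    (hx : ∀ i j, i ≤ j → (x i).Reaches (x j)) (s : Set Q.A) :
    ((fun k => (x k).arrowSet) ⁻¹' {s}).OrdConnected := by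
  refine ⟨fun i hi j hj k hk => ?_⟩
  have hi : (x i).arrowSet = s := hi
  have hj : (x j).arrowSet = s := hj
  have hki : (x k).Reaches (x i) := (hx k j hk.2).of_arrowSet_eq_right (hj.trans hi.symm)
  exact (hex.arrowSet_eq_of_reaches_of_reaches hki (hx i k hk.1)).trans hi

theorem mem_upperBounds_kron (hex : Q.Exclusive) {n : ℕ}
    (hn : n ∈ upperBounds {k | Q.HasChainOfCycles k}) :
    2 * n - 1 ∈ upperBounds {m | Q.kron.HasChainOfCycles m} := by
  rintro m ⟨cs, hdist, hreach⟩
  rcases Nat.eq_zero_or_pos m with rfl | hm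
  · exact Nat.zero_le _
  have hx : ∀ i j, i ≤ j → (cs i).Reaches (cs j) := fun i j h => Cycle.reaches_of_le hreach h
  have hchain : ∀ F : Q.kron.V ⥤q Q.V,
      (Fin.firstOccurrences fun k => ((cs k).map F).arrowSet).card ≤ n := fun F =>
    hn (hasChainOfCycles_card_firstOccurrences fun i j h => (hx i j h).map F)
  have hconv : ∀ (F : Q.kron.V ⥤q Q.V) s,
      ((fun k => ((cs k).map F).arrowSet) ⁻¹' {s}).OrdConnected := fun F =>
    hex.ordConnected_preimage_arrowSet fun i j h => (hx i j h).map F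
  have hsep : ∀ i j, i < j → ((cs i).map Q.kronFst).arrowSet ≠ ((cs j).map Q.kronFst).arrowSet ∨
      ((cs i).map Q.kronSnd).arrowSet ≠ ((cs j).map Q.kronSnd).arrowSet := by
    intro i j hij
    by_contra! h
    exact hdist i j hij.ne (hex.kron_arrowSet_eq (hx i j hij.le) h.1 h.2)
  have := Fin.add_one_le_card_firstOccurrences_add hm (hconv _) (hconv _) hsep
  have := hchain Q.kronFst
  have := hchain Q.kronSnd
  omega

theorem kron_hasChainOfCycles (hex : Q.Exclusive) {n : ℕ} (h : Q.HasChainOfCycles n) :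
    Q.kron.HasChainOfCycles (2 * n - 1) := by
  obtain ⟨cs, hdist, hreach⟩ := h
  choose M hMA hDM hMD using fun (i j : Fin n) (hij : i ≤ j) =>
    (Cycle.reaches_of_le hreach hij).exists_kron_cycle
  have hidx : ∀ {i j a}, a ∈ (cs i).arrowSet → a ∈ (cs j).arrowSet → i = j := fun ha hb =>
    by_contra fun h => hdist _ _ h (hex.arrowSet_eq_of_mem_vertSet
      (Cycle.source_mem_vertSet ha) (Cycle.source_mem_vertSet hb))
  -- The `k`-th term is `M ⌊k/2⌋ ⌈k/2⌉`; at even `k` the cycle `M i i` takes the place of `Δcᵢ`,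
  -- and consecutive terms are linked through the `Δcᵢ` they share.
  let lo : Fin (2 * n - 1) → Fin n := fun k => ⟨k / 2, by omega⟩
  let hi : Fin (2 * n - 1) → Fin n := fun k => ⟨(k + 1) / 2, by omega⟩
  have hle : ∀ k, lo k ≤ hi k := fun k => Fin.mk_le_mk.2 (by omega)
  refine ⟨fun k => M (lo k) (hi k) (hle k), fun k k' hkk' heq => hkk' ?_,
    fun i h => (hMD _ _ _).trans (hDM _ _ _)⟩
  obtain ⟨a, ha⟩ := (M (lo k) (hi k) (hle k)).arrowSet_nonempty
  obtain ⟨ha₁, ha₂⟩ := hMA _ _ _ a ha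
  obtain ⟨ha₁', ha₂'⟩ := hMA _ _ _ a (heq ▸ ha)
  have h₁ := Fin.val_eq_of_eq (hidx ha₁ ha₁')
  have h₂ := Fin.val_eq_of_eq (hidx ha₂ ha₂')
  simp only [lo, hi] at h₁ h₂
  omega

end Exclusive

end Quiv

theorem stmt17_general (Q : Quiv) (n : ℕ)
    (hex : Q.Exclusive) (hmax : IsGreatest {m | Q.HasChainOfCycles m} n) :
    IsGreatest {m | Q.kron.HasChainOfCycles m} (2 * n - 1) :=
  ⟨hex.kron_hasChainOfCycles hmax.1, hex.mem_upperBounds_kron hmax.2⟩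

/-- If a finite quiver `Q` satisfies the exclusive condition and the maximal length of a chain
of cycles in `Q` is `n`, then the maximal length of a chain of cycles in the Kronecker square
`Q̂` is `2n - 1`. -/
theorem stmt17 (Q : Quiv) [Finite Q.V] [Finite Q.A] (n : ℕ)
    (hex : Q.Exclusive) (hmax : IsGreatest {m | Q.HasChainOfCycles m} n) :
    IsGreatest {m | Q.kron.HasChainOfCycles m} (2 * n - 1) :=
  stmt17_general Q n hex hmax
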